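/- arXiv:1512.08295 — 3 statements merged into one kernel-verified Lean document; each statement's English description precedes it below -/
import Mathlib

section
/- Let w ∈ S_n and let (i_1,…,i_m) and (j_1,…,j_m) be two reduced words for w, i.e. w = s_{i_1}⋯s_{i_m} = s_{j_1}⋯s_{j_m} with m = ℓ(w). Then the composite operators ∂_{i_1}∘∂_{i_2}∘⋯∘∂_{i_m} and ∂_{j_1}∘∂_{j_2}∘⋯∘∂_{j_m} on ℤ[ε_1,…,ε_n] are equal. Hence ∂_w := ∂_{i_1}∘⋯∘∂_{i_m} is well defined, independent of the chosen reduced word. -/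
/-!
Each `∂ᵢ` is characterised by `(εᵢ - εᵢ₊₁) * ∂ᵢ f = f - sᵢ f`. Clearing denominators with this
identity shows that the `∂ᵢ` satisfy the Coxeter relations `∂ᵢ∂ⱼ = ∂ⱼ∂ᵢ` for `|i - j| ≥ 2` and
`∂ᵢ∂ᵢ₊₁∂ᵢ = ∂ᵢ₊₁∂ᵢ∂ᵢ₊₁`; for the latter, both sides times the Vandermonde product of
`εᵢ, εᵢ₊₁, εᵢ₊₂` are the alternating sum of `f` over the copy of `S₃` generated by `sᵢ, sᵢ₊₁`.

Any family of maps satisfying the Coxeter relations takes the same value on all reduced words of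
`w`, by induction on `ℓ(w)`. If two reduced words begin with `i ≠ j`, both `i` and `j` are left
descents of `w`, so `w` also has reduced words beginning with `j i` and `i j` (if `|i - j| ≥ 2`)
or with `j i j` and `i j i` (if `j = i + 1`); these are compared by a single Coxeter relation,
and each is compared with the given word of the same first letter by induction.
-/

open MvPolynomial

/-- The adjacent transposition swapping `i` and `i+1` (0-indexed). -/
def sT (n : ℕ) (i : ℕ) : Equiv.Perm (Fin n) :=
  if h : i + 1 < n then Equiv.swap ⟨i, Nat.lt_of_succ_lt h⟩ ⟨i + 1, h⟩ else 1

/-- Product of a word in the simple transpositions. -/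
def wordProd (n : ℕ) (l : List ℕ) : Equiv.Perm (Fin n) := (l.map (sT n)).prod

/-- Number of inversions = Coxeter length. -/
def invLen {n : ℕ} (w : Equiv.Perm (Fin n)) : ℕ :=
  (Finset.univ.filter fun p : Fin n × Fin n => p.1 < p.2 ∧ w p.2 < w p.1).card

open Classical in
/-- The divided difference operator. -/
noncomputable def dd (n : ℕ) (i : ℕ) (f : MvPolynomial (Fin n) ℤ) : MvPolynomial (Fin n) ℤ :=
  if h : i + 1 < n then
    if hd : ∃ g : MvPolynomial (Fin n) ℤ,
        f - rename (⇑(sT n i)) f = (X ⟨i, Nat.lt_of_succ_lt h⟩ - X ⟨i + 1, h⟩) * g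
    then hd.choose else 0
  else 0

open Classical in
noncomputable def ddList (n : ℕ) : List ℕ → MvPolynomial (Fin n) ℤ → MvPolynomial (Fin n) ℤ
  | [], f => f
  | i :: t, f => dd n i (ddList n t f)

def IsReducedWord (n : ℕ) (l : List ℕ) (w : Equiv.Perm (Fin n)) : Prop :=
  (∀ i ∈ l, i + 1 < n) ∧ wordProd n l = w ∧ l.length = invLen w

noncomputable def nest (n : ℕ) :
    List (List ℕ) → List (MvPolynomial (Fin n) ℤ) → MvPolynomial (Fin n) ℤ
  | [], _ => 1
  | _ :: _, [] => 1
  | l :: ls, g :: gs => ddList n l (g * nest n ls gs)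

noncomputable def xv (n j : ℕ) : MvPolynomial (Fin n) ℤ := if h : j < n then X ⟨j, h⟩ else 0

open Equiv Finset

theorem Equiv.swap_braid {α : Type*} [DecidableEq α] {a b c : α} (hab : a ≠ b) (hbc : b ≠ c)
    (hac : a ≠ c) : swap a b * swap b c * swap a b = swap b c * swap a b * swap b c := by
  have e₁ := swap_mul_swap_mul_swap hbc.symm hac.symm
  have e₂ := swap_mul_swap_mul_swap hab hac
  simp only [swap_comm] at e₁ e₂ ⊢
  rw [e₁, e₂]

namespace MvPolynomial

variable {σ R : Type*} [CommRing R]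

theorem X_sub_X_ne_zero [IsDomain R] {a b : σ} (h : a ≠ b) : (X a - X b : MvPolynomial σ R) ≠ 0 :=
  sub_ne_zero.2 fun hX => h (X_injective hX)

theorem rename_rename_perm (π τ : Perm σ) (f : MvPolynomial σ R) :
    rename π (rename τ f) = rename (π * τ) f := by
  rw [rename_rename, Perm.coe_mul]

variable [DecidableEq σ]

theorem X_sub_X_dvd_sub_rename_swap (a b : σ) (f : MvPolynomial σ R) :
    X a - X b ∣ f - rename (swap a b) f := by
  let I := Ideal.span {(X a - X b : MvPolynomial σ R)}
  have hab : Ideal.Quotient.mk I (X a) = Ideal.Quotient.mk I (X b) :=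
    Ideal.Quotient.eq.2 (Ideal.mem_span_singleton_self _)
  have hmk : (Ideal.Quotient.mkₐ R I).comp (rename (swap a b)) = Ideal.Quotient.mkₐ R I := by
    refine algHom_ext fun c => ?_
    simp only [AlgHom.comp_apply, rename_X, Ideal.Quotient.mkₐ_eq_mk]
    rcases eq_or_ne c a with rfl | hca
    · rw [swap_apply_left, hab]
    rcases eq_or_ne c b with rfl | hcb
    · rw [swap_apply_right, hab]
    · rw [swap_apply_of_ne_of_ne hca hcb]
  rw [← Ideal.mem_span_singleton, ← Ideal.Quotient.eq]
  exact (congrArg (· f) hmk).symm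

def IsDivDiff (a b : σ) (D : MvPolynomial σ R → MvPolynomial σ R) : Prop :=
  ∀ f, (X a - X b) * D f = f - rename (swap a b) f

namespace IsDivDiff

variable {a b c d : σ} {D D₁ D₂ : MvPolynomial σ R → MvPolynomial σ R}

theorem symm (hD : IsDivDiff a b D) : IsDivDiff b a (-D) := fun f => by
  rw [Pi.neg_apply, swap_comm, ← hD f]; ring

variable [IsDomain R]

theorem rename_swap_apply (hD : IsDivDiff a b D) (hab : a ≠ b) (f : MvPolynomial σ R) :
    rename (swap a b) (D f) = D f := by
  refine mul_left_cancel₀ (X_sub_X_ne_zero hab) ?_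
  have h := congrArg (rename (swap a b)) (hD f)
  simp only [map_mul, map_sub, rename_X, swap_apply_left, swap_apply_right,
    rename_rename_perm, swap_mul_self, Perm.coe_one, rename_id, AlgHom.id_apply] at h
  linear_combination -h - hD f

theorem apply_neg (hD : IsDivDiff a b D) (hab : a ≠ b) (f : MvPolynomial σ R) :
    D (-f) = -D f :=
  mul_left_cancel₀ (X_sub_X_ne_zero hab) <| by
    have h := hD (-f)
    rw [map_neg] at h
    linear_combination h + hD f

theorem comm (h₁ : IsDivDiff a b D₁) (h₂ : IsDivDiff c d D₂) (hl : [a, b, c, d].Nodup)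
    (f : MvPolynomial σ R) : D₁ (D₂ f) = D₂ (D₁ f) := by
  obtain ⟨⟨hab, hac, had⟩, ⟨hbc, hbd⟩, hcd⟩ :
      (a ≠ b ∧ a ≠ c ∧ a ≠ d) ∧ (b ≠ c ∧ b ≠ d) ∧ c ≠ d := by
    simpa [not_or] using hl
  have h₂' := congrArg (rename (swap a b)) (h₂ f)
  have h₁' := congrArg (rename (swap c d)) (h₁ f)
  simp only [map_mul, map_sub, rename_X, rename_rename_perm] at h₁' h₂'
  rw [swap_apply_of_ne_of_ne hac.symm hbc.symm, swap_apply_of_ne_of_ne had.symm hbd.symm] at h₂'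
  rw [swap_apply_of_ne_of_ne hac had, swap_apply_of_ne_of_ne hbc hbd] at h₁'
  have hst : swap a b * swap c d = swap c d * swap a b :=
    (Perm.disjoint_swap_swap hl).commute
  refine mul_left_cancel₀ (X_sub_X_ne_zero hab) (mul_left_cancel₀ (X_sub_X_ne_zero hcd) ?_)
  linear_combination (X c - X d) * h₁ (D₂ f) - (X a - X b) * h₂ (D₁ f) + h₂ f - h₂' - h₁ f + h₁'
    + congrArg (fun π : Perm σ => rename π f) hst

theorem vandermonde_mul_apply_apply_apply (h₁ : IsDivDiff a b D₁) (h₂ : IsDivDiff b c D₂)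
    (hab : a ≠ b) (hbc : b ≠ c) (hac : a ≠ c) (f : MvPolynomial σ R) :
    (X a - X b) * (X b - X c) * (X a - X c) * D₁ (D₂ (D₁ f)) =
      f - rename (swap a b) f - rename (swap b c) f
        + rename (swap a b * swap b c) f + rename (swap b c * swap a b) f
        - rename (swap a b * swap b c * swap a b) f := by
  have E₁ := h₁ f
  have E₂ := h₂ (D₁ f)
  have E₃ := h₁ (D₂ (D₁ f))
  have E₂' := congrArg (rename (swap a b)) E₂
  have E₁' := congrArg (rename (swap b c)) E₁
  have E₁'' := congrArg (rename (swap a b)) E₁'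
  simp only [map_mul, map_sub, rename_X, rename_rename_perm, swap_apply_left, swap_apply_right,
    swap_apply_of_ne_of_ne hac.symm hbc.symm, swap_apply_of_ne_of_ne hab hac, ← mul_assoc]
    at E₂' E₁' E₁''
  rw [← rename_rename_perm, h₁.rename_swap_apply hab, rename_rename_perm] at E₂'
  linear_combination (X b - X c) * (X a - X c) * E₃ + (X a - X c) * E₂ - (X b - X c) * E₂'
    + E₁ - E₁' + E₁''

theorem braid (h₁ : IsDivDiff a b D₁) (h₂ : IsDivDiff b c D₂)
    (hab : a ≠ b) (hbc : b ≠ c) (hac : a ≠ c) (f : MvPolynomial σ R) :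
    D₁ (D₂ (D₁ f)) = D₂ (D₁ (D₂ f)) := by
  have hlhs := h₁.vandermonde_mul_apply_apply_apply h₂ hab hbc hac f
  -- the right-hand side is the left-hand side for the reversed triple `c, b, a` and `-D₂, -D₁`
  have hrhs := h₂.symm.vandermonde_mul_apply_apply_apply h₁.symm hbc.symm hab.symm hac.symm f
  simp only [Pi.neg_apply, h₁.apply_neg hab, neg_neg, swap_comm c b, swap_comm b a] at hrhs
  refine mul_left_cancel₀ (mul_ne_zero (mul_ne_zero (X_sub_X_ne_zero hab) (X_sub_X_ne_zero hbc))
    (X_sub_X_ne_zero hac)) ?_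
  linear_combination hlhs - hrhs - congrArg (fun π : Perm σ => rename π f) (swap_braid hab hbc hac)

end IsDivDiff
end MvPolynomial

section Permutations

variable {n i j : ℕ}

theorem sT_of_lt (h : i + 1 < n) : sT n i = swap ⟨i, Nat.lt_of_succ_lt h⟩ ⟨i + 1, h⟩ := dif_pos h

theorem sT_of_not_lt (h : ¬i + 1 < n) : sT n i = 1 := dif_neg h

theorem sT_mul_self (n i : ℕ) : sT n i * sT n i = 1 := by
  unfold sT; split_ifs <;> simp

theorem sT_inv (n i : ℕ) : (sT n i)⁻¹ = sT n i :=
  inv_eq_of_mul_eq_one_left (sT_mul_self n i)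

theorem sT_mul_sT_mul (w : Perm (Fin n)) : sT n i * (sT n i * w) = w := by
  rw [← mul_assoc, sT_mul_self, one_mul]

theorem sT_apply_left (h : i + 1 < n) : sT n i ⟨i, Nat.lt_of_succ_lt h⟩ = ⟨i + 1, h⟩ := by
  rw [sT_of_lt h, swap_apply_left]

theorem sT_apply_right (h : i + 1 < n) : sT n i ⟨i + 1, h⟩ = ⟨i, Nat.lt_of_succ_lt h⟩ := by
  rw [sT_of_lt h, swap_apply_right]

theorem sT_apply_of_ne {x : Fin n} (h₁ : (x : ℕ) ≠ i) (h₂ : (x : ℕ) ≠ i + 1) : sT n i x = x := by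
  unfold sT
  split_ifs
  · exact swap_apply_of_ne_of_ne (Fin.ne_of_val_ne h₁) (Fin.ne_of_val_ne h₂)
  · rfl

theorem sT_lt_sT_iff (h : i + 1 < n) {u v : Fin n} (huv : ¬((u : ℕ) = i ∧ (v : ℕ) = i + 1))
    (hvu : ¬((v : ℕ) = i ∧ (u : ℕ) = i + 1)) : sT n i u < sT n i v ↔ u < v := by
  simp only [sT_of_lt h, swap_apply_def, Fin.lt_def, Fin.ext_iff]
  split_ifs <;> simp only [] <;> omega

theorem sT_mul_inv_apply (w : Perm (Fin n)) (x : Fin n) : (sT n i * w)⁻¹ x = w⁻¹ (sT n i x) := by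
  rw [mul_inv_rev, sT_inv, Perm.mul_apply]

theorem sT_comm (hij : i + 2 ≤ j) : sT n i * sT n j = sT n j * sT n i := by
  by_cases hj : j + 1 < n
  · rw [sT_of_lt (by omega : i + 1 < n), sT_of_lt hj]
    exact (Perm.disjoint_swap_swap (by simp [Fin.ext_iff]; omega)).commute
  · rw [sT_of_not_lt hj, one_mul, mul_one]

theorem sT_braid (h : i + 2 < n) :
    sT n i * sT n (i + 1) * sT n i = sT n (i + 1) * sT n i * sT n (i + 1) := by
  rw [sT_of_lt (by omega : i + 1 < n), sT_of_lt h]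
  exact swap_braid (by simp) (by simp) (by simp; omega)

end Permutations

theorem Finset.card_filter_add_one_of_iff_of_ne {α : Type*} [Fintype α] [DecidableEq α]
    {p q : α → Prop} [DecidablePred p] [DecidablePred q] {x : α} (hpx : p x) (hqx : ¬q x)
    (h : ∀ y ≠ x, q y ↔ p y) : #{y | q y} + 1 = #{y | p y} := by
  have : ({y | q y} : Finset α) = ({y | p y} : Finset α).erase x := by
    ext y
    by_cases hy : y = x
    · simp [hy, hqx]
    · simp [hy, h y hy]
  rw [this, card_erase_add_one (by simpa using hpx)]

section Length

variable {n i j : ℕ}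

def IsLeftDescent (w : Perm (Fin n)) (i : ℕ) : Prop :=
  ∃ h : i + 1 < n, w⁻¹ ⟨i + 1, h⟩ < w⁻¹ ⟨i, Nat.lt_of_succ_lt h⟩

theorem invLen_one : invLen (1 : Perm (Fin n)) = 0 := by
  rw [invLen, card_eq_zero, filter_eq_empty_iff]
  exact fun p _ hp => lt_asymm hp.1 hp.2

theorem IsLeftDescent.invLen_sT_mul_add_one {w : Perm (Fin n)} (hd : IsLeftDescent w i) :
    invLen (sT n i * w) + 1 = invLen w := by
  obtain ⟨h, hd⟩ := hd
  refine card_filter_add_one_of_iff_of_ne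
    (x := (w⁻¹ ⟨i + 1, h⟩, w⁻¹ ⟨i, Nat.lt_of_succ_lt h⟩)) ?_ ?_ ?_
  · simp only [Perm.inv_def, apply_symm_apply] at hd ⊢
    exact ⟨hd, Fin.mk_lt_mk.2 (by omega)⟩
  · simp only [Perm.mul_apply, Perm.inv_def, apply_symm_apply, sT_apply_left h, sT_apply_right h]
    exact fun hq => absurd hq.2 (by simp)
  rintro ⟨u, v⟩ hne
  simp only [Perm.mul_apply, and_congr_right_iff]
  intro huv
  refine sT_lt_sT_iff h (fun ⟨h₁, h₂⟩ => ?_) (fun ⟨h₁, h₂⟩ => ?_)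
  · exact hne (Prod.ext (by simp [← h₂]) (by simp [← h₁]))
  · obtain rfl : u = w⁻¹ ⟨i, Nat.lt_of_succ_lt h⟩ := Perm.eq_inv_iff_eq.2 (Fin.ext h₁)
    obtain rfl : v = w⁻¹ ⟨i + 1, h⟩ := Perm.eq_inv_iff_eq.2 (Fin.ext h₂)
    exact lt_asymm hd huv

theorem isLeftDescent_sT_mul (h : i + 1 < n) {w : Perm (Fin n)} (hd : ¬IsLeftDescent w i) :
    IsLeftDescent (sT n i * w) i := by
  refine ⟨h, ?_⟩
  rw [sT_mul_inv_apply, sT_mul_inv_apply, sT_apply_left h, sT_apply_right h]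
  refine lt_of_le_of_ne (not_lt.1 fun hlt => hd ⟨h, hlt⟩) fun heq => ?_
  simpa using w⁻¹.injective heq

theorem invLen_sT_mul_of_not_isLeftDescent (h : i + 1 < n) {w : Perm (Fin n)}
    (hd : ¬IsLeftDescent w i) : invLen (sT n i * w) = invLen w + 1 := by
  have := (isLeftDescent_sT_mul h hd).invLen_sT_mul_add_one
  rwa [sT_mul_sT_mul, eq_comm] at this

theorem invLen_sT_mul_le (i : ℕ) (w : Perm (Fin n)) : invLen (sT n i * w) ≤ invLen w + 1 := by
  by_cases h : i + 1 < n
  · by_cases hd : IsLeftDescent w i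
    · have := hd.invLen_sT_mul_add_one
      omega
    · exact (invLen_sT_mul_of_not_isLeftDescent h hd).le
  · rw [sT_of_not_lt h, one_mul]
    exact Nat.le_succ _

theorem wordProd_cons (i : ℕ) (t : List ℕ) : wordProd n (i :: t) = sT n i * wordProd n t := by
  simp [wordProd]

theorem invLen_wordProd_le (l : List ℕ) : invLen (wordProd n l) ≤ l.length := by
  induction l with
  | nil => simp [wordProd, invLen_one]
  | cons i t ih =>
    rw [wordProd_cons, List.length_cons]
    exact (invLen_sT_mul_le i _).trans (Nat.succ_le_succ ih)

theorem isReducedWord_of_length_le {l : List ℕ} {w : Perm (Fin n)} (hl : ∀ k ∈ l, k + 1 < n)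
    (hw : wordProd n l = w) (hlen : l.length ≤ invLen w) : IsReducedWord n l w :=
  ⟨hl, hw, le_antisymm hlen (hw ▸ invLen_wordProd_le l)⟩

theorem isReducedWord_cons_iff {t : List ℕ} {w : Perm (Fin n)} :
    IsReducedWord n (i :: t) w ↔ IsLeftDescent w i ∧ IsReducedWord n t (sT n i * w) := by
  constructor
  · rintro ⟨hl, hw, hlen⟩
    have hi : i + 1 < n := hl i List.mem_cons_self
    have hle := invLen_sT_mul_le i (sT n i * w)
    rw [sT_mul_sT_mul] at hle
    have ht : IsReducedWord n t (sT n i * w) :=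
      isReducedWord_of_length_le (fun k hk => hl k (List.mem_cons_of_mem i hk))
        (by rw [← hw, wordProd_cons, sT_mul_sT_mul]) (by rw [List.length_cons] at hlen; omega)
    refine ⟨by_contra fun hd => ?_, ht⟩
    have := invLen_sT_mul_of_not_isLeftDescent hi hd
    have := ht.2.2
    rw [List.length_cons] at hlen
    omega
  · rintro ⟨hd, ht⟩
    refine isReducedWord_of_length_le ?_ (by rw [wordProd_cons, ht.2.1, sT_mul_sT_mul]) ?_
    · simpa using ⟨hd.1, ht.1⟩
    · rw [List.length_cons, ht.2.2, hd.invLen_sT_mul_add_one]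

theorem eq_one_of_forall_not_isLeftDescent {w : Perm (Fin n)} (hw : ∀ i, ¬IsLeftDescent w i) :
    w = 1 := by
  cases n with
  | zero => exact Subsingleton.elim _ _
  | succ m =>
    have hmono : StrictMono ⇑w⁻¹ := Fin.strictMono_iff_lt_succ.2 fun i => by
      refine lt_of_le_of_ne (not_lt.1 fun hlt => hw i ⟨by omega, hlt⟩) fun heq => ?_
      simpa [Fin.ext_iff] using w⁻¹.injective heq
    rw [← inv_eq_one]
    exact Equiv.ext fun x => congrFun hmono.eq_id x

theorem exists_isReducedWord (w : Perm (Fin n)) : ∃ l, IsReducedWord n l w := by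
  induction hm : invLen w using Nat.strong_induction_on generalizing w with
  | _ m ih =>
    by_cases hw : ∃ i, IsLeftDescent w i
    · obtain ⟨i, hd⟩ := hw
      obtain ⟨t, ht⟩ := ih _ (by have := hd.invLen_sT_mul_add_one; omega) (sT n i * w) rfl
      exact ⟨i :: t, isReducedWord_cons_iff.2 ⟨hd, ht⟩⟩
    · rw [eq_one_of_forall_not_isLeftDescent (not_exists.1 hw)]
      exact ⟨[], by simp, rfl, invLen_one.symm⟩

theorem IsLeftDescent.sT_mul_of_far {w : Perm (Fin n)} (hd : IsLeftDescent w j)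
    (hij : i + 2 ≤ j ∨ j + 2 ≤ i) : IsLeftDescent (sT n i * w) j := by
  obtain ⟨h, hd⟩ := hd
  refine ⟨h, ?_⟩
  rwa [sT_mul_inv_apply, sT_mul_inv_apply,
    sT_apply_of_ne (by dsimp only; omega) (by dsimp only; omega),
    sT_apply_of_ne (by dsimp only; omega) (by dsimp only; omega)]

theorem IsLeftDescent.sT_mul_succ {w : Perm (Fin n)} (hd : IsLeftDescent w i)
    (hd' : IsLeftDescent w (i + 1)) : IsLeftDescent (sT n i * w) (i + 1) := by
  obtain ⟨h, hd⟩ := hd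
  obtain ⟨h', hd'⟩ := hd'
  refine ⟨h', ?_⟩
  rw [sT_mul_inv_apply, sT_mul_inv_apply,
    sT_apply_of_ne (by dsimp only; omega) (by dsimp only; omega), sT_apply_right h]
  exact hd'.trans hd

theorem IsLeftDescent.sT_succ_mul_sT_mul {w : Perm (Fin n)} (hd : IsLeftDescent w (i + 1)) :
    IsLeftDescent (sT n (i + 1) * (sT n i * w)) i := by
  obtain ⟨h, hd⟩ := hd
  refine ⟨by omega, ?_⟩
  rwa [sT_mul_inv_apply, sT_mul_inv_apply, sT_mul_inv_apply, sT_mul_inv_apply, sT_apply_left h,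
    sT_apply_of_ne (x := ⟨i + 2, h⟩) (by dsimp only; omega) (by dsimp only; omega),
    sT_apply_of_ne (x := ⟨i, by omega⟩) (by dsimp only; omega) (by dsimp only; omega),
    sT_apply_left (by omega)]

theorem exists_isReducedWord_of_far {w : Perm (Fin n)} (hdi : IsLeftDescent w i)
    (hdj : IsLeftDescent w j) (hij : i + 2 ≤ j) :
    ∃ r, IsReducedWord n (j :: r) (sT n i * w) ∧ IsReducedWord n (i :: r) (sT n j * w) := by
  obtain ⟨r, hr⟩ := exists_isReducedWord (sT n j * (sT n i * w))
  have hdj' := hdj.sT_mul_of_far (Or.inl hij)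
  refine ⟨r, isReducedWord_cons_iff.2 ⟨hdj', hr⟩, isReducedWord_of_length_le ?_ ?_ ?_⟩
  · simpa using ⟨hdi.1, hr.1⟩
  · rw [wordProd_cons, hr.2.1, ← mul_assoc, sT_comm hij, mul_assoc, sT_mul_sT_mul]
  · have := hdi.invLen_sT_mul_add_one
    have := hdj.invLen_sT_mul_add_one
    have := hdj'.invLen_sT_mul_add_one
    rw [List.length_cons, hr.2.2]
    omega

theorem exists_isReducedWord_of_succ {w : Perm (Fin n)} (hdi : IsLeftDescent w i)
    (hdi' : IsLeftDescent w (i + 1)) :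
    ∃ r, IsReducedWord n ((i + 1) :: i :: r) (sT n i * w) ∧
      IsReducedWord n (i :: (i + 1) :: r) (sT n (i + 1) * w) := by
  obtain ⟨r, hr⟩ := exists_isReducedWord (sT n i * (sT n (i + 1) * (sT n i * w)))
  have := hdi.invLen_sT_mul_add_one
  have := hdi'.invLen_sT_mul_add_one
  have := (hdi.sT_mul_succ hdi').invLen_sT_mul_add_one
  have := hdi'.sT_succ_mul_sT_mul.invLen_sT_mul_add_one
  have hlen := hr.2.2
  have hl : ∀ k ∈ r, k + 1 < n := hr.1
  refine ⟨r, isReducedWord_of_length_le ?_ ?_ ?_, isReducedWord_of_length_le ?_ ?_ ?_⟩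
  · simpa using ⟨hdi'.1, hdi.1, hl⟩
  · rw [wordProd_cons, wordProd_cons, hr.2.1, sT_mul_sT_mul, sT_mul_sT_mul]
  · simp only [List.length_cons]
    omega
  · simpa using ⟨hdi.1, hdi'.1, hl⟩
  · rw [wordProd_cons, wordProd_cons, hr.2.1]
    simp only [← mul_assoc]
    rw [sT_braid hdi'.1]
    simp only [mul_assoc, sT_mul_sT_mul]
  · simp only [List.length_cons]
    omega

end Length

section CoxeterRelations

variable {α : Type*} {φ : ℕ → α → α} {n : ℕ}

theorem foldr_cons_eq_foldr_cons
    (hcomm : ∀ i j, i + 2 ≤ j → j + 1 < n → ∀ x, φ i (φ j x) = φ j (φ i x))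
    (hbraid : ∀ i, i + 2 < n → ∀ x, φ i (φ (i + 1) (φ i x)) = φ (i + 1) (φ i (φ (i + 1) x)))
    {m : ℕ} {x : α} (ih : ∀ {u : Perm (Fin n)} {l l' : List ℕ}, IsReducedWord n l u →
      IsReducedWord n l' u → l.length = m → l.foldr φ x = l'.foldr φ x)
    {w : Perm (Fin n)} {i j : ℕ} {t₁ t₂ : List ℕ} (h₁ : IsReducedWord n (i :: t₁) w)
    (h₂ : IsReducedWord n (j :: t₂) w) (hm : t₁.length = m) :
    (i :: t₁).foldr φ x = (j :: t₂).foldr φ x := by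
  have hm₂ : t₂.length = m := by
    have := h₁.2.2.trans h₂.2.2.symm
    simp only [List.length_cons] at this
    omega
  wlog hij : i ≤ j generalizing i j t₁ t₂
  · exact (this h₂ h₁ hm₂ hm (by omega)).symm
  obtain ⟨hdi, ht₁⟩ := isReducedWord_cons_iff.1 h₁
  obtain ⟨hdj, ht₂⟩ := isReducedWord_cons_iff.1 h₂
  simp only [List.foldr_cons]
  obtain rfl | rfl | hij := (by omega : i = j ∨ j = i + 1 ∨ i + 2 ≤ j)
  · rw [ih ht₁ ht₂ hm]
  · obtain ⟨r, hr₁, hr₂⟩ := exists_isReducedWord_of_succ hdi hdj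
    rw [ih ht₁ hr₁ hm, ih ht₂ hr₂ hm₂]
    exact hbraid i hdj.1 _
  · obtain ⟨r, hr₁, hr₂⟩ := exists_isReducedWord_of_far hdi hdj hij
    rw [ih ht₁ hr₁ hm, ih ht₂ hr₂ hm₂]
    exact hcomm i j hij hdj.1 _

theorem foldr_eq_of_isReducedWord
    (hcomm : ∀ i j, i + 2 ≤ j → j + 1 < n → ∀ x, φ i (φ j x) = φ j (φ i x))
    (hbraid : ∀ i, i + 2 < n → ∀ x, φ i (φ (i + 1) (φ i x)) = φ (i + 1) (φ i (φ (i + 1) x)))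
    {w : Perm (Fin n)} {l₁ l₂ : List ℕ} (h₁ : IsReducedWord n l₁ w) (h₂ : IsReducedWord n l₂ w)
    (x : α) : l₁.foldr φ x = l₂.foldr φ x := by
  have hlen : l₂.length = l₁.length := h₂.2.2.trans h₁.2.2.symm
  induction hm : l₁.length generalizing w l₁ l₂ with
  | zero => rw [List.length_eq_zero_iff.1 hm, List.length_eq_zero_iff.1 (hlen.trans hm)]
  | succ m ih =>
    obtain ⟨i, t₁, rfl⟩ := List.exists_cons_of_length_eq_add_one hm
    obtain ⟨j, t₂, rfl⟩ := List.exists_cons_of_length_eq_add_one (hlen.trans hm)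
    exact foldr_cons_eq_foldr_cons hcomm hbraid
      (fun h h' hl => ih h h' (h'.2.2.trans h.2.2.symm) hl) h₁ h₂ (by simpa using hm)

end CoxeterRelations

section DividedDifference

variable {n i : ℕ}

theorem isDivDiff_dd (h : i + 1 < n) :
    IsDivDiff (R := ℤ) ⟨i, Nat.lt_of_succ_lt h⟩ ⟨i + 1, h⟩ (dd n i) := fun f => by
  have hdvd : ∃ g, f - rename (sT n i) f = (X ⟨i, Nat.lt_of_succ_lt h⟩ - X ⟨i + 1, h⟩) * g := by
    rw [sT_of_lt h]
    exact X_sub_X_dvd_sub_rename_swap _ _ f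
  rw [dd, dif_pos h, dif_pos hdvd, ← sT_of_lt h]
  exact hdvd.choose_spec.symm

theorem dd_comm (i j : ℕ) (hij : i + 2 ≤ j) (hj : j + 1 < n) (f : MvPolynomial (Fin n) ℤ) :
    dd n i (dd n j f) = dd n j (dd n i f) :=
  (isDivDiff_dd (by omega)).comm (isDivDiff_dd hj) (by simp [Fin.ext_iff]; omega) f

theorem dd_braid (i : ℕ) (h : i + 2 < n) (f : MvPolynomial (Fin n) ℤ) :
    dd n i (dd n (i + 1) (dd n i f)) = dd n (i + 1) (dd n i (dd n (i + 1) f)) :=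
  (isDivDiff_dd (by omega)).braid (isDivDiff_dd h) (by simp) (by simp) (by simp; omega) f

theorem ddList_eq_foldr (l : List ℕ) (f : MvPolynomial (Fin n) ℤ) :
    ddList n l f = l.foldr (dd n) f := by
  induction l with
  | nil => rfl
  | cons i t ih => rw [ddList, ih, List.foldr_cons]

end DividedDifference

/-- any two reduced words for `w ∈ S_n` give the same composite
divided difference operator `∂_w = ∂_{i_1} ∘ ⋯ ∘ ∂_{i_m}`. -/
theorem stmt1 (n : ℕ) (w : Equiv.Perm (Fin n)) (l₁ l₂ : List ℕ)
    (h₁ : IsReducedWord n l₁ w) (h₂ : IsReducedWord n l₂ w) :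
    ∀ f : MvPolynomial (Fin n) ℤ, ddList n l₁ f = ddList n l₂ f := by
  intro f
  rw [ddList_eq_foldr, ddList_eq_foldr]
  exact foldr_eq_of_isReducedWord dd_comm dd_braid h₁ h₂ f
end

section
/- The word x̄ = w̄_m z̄_m w̄_{m−1} z̄_{m−1} ⋯ w̄_1 z̄_1 is a reduced expression: the Coxeter length of its product x ∈ S_N equals the total number of letters of x̄. -/
/-- `b_i = a_1 + ⋯ + a_i` (with `a_{j+1} = as j`). -/
def bsum (as : ℕ → ℕ) (i : ℕ) : ℕ := ∑ j ∈ Finset.range i, as j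

/-- The word `w̄_{i+1} = (s_{k_{i+1}}, …, s_{n−1})`, 0-indexed: letters
`cs i, cs i + 1, …, n − 2` where `cs i = k_{i+1} − 1`. -/
def wbar (n : ℕ) (cs : ℕ → ℕ) (i : ℕ) : List ℕ := List.range' (cs i) (n - 1 - cs i)

/-- The word `z̄_{i+1}`: the concatenation, for `j` running from `b_{i+1} − 1` down to
`b_i`, of the blocks `(s_n, s_{n+1}, …, s_{n+j})` (0-indexed letters
`n − 1, n, …, n − 1 + j`). -/
def zbar (n : ℕ) (as : ℕ → ℕ) (i : ℕ) : List ℕ :=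
  ((List.range (as i)).map fun t => List.range' (n - 1) (bsum as (i + 1) - t)).flatten

/-- The concatenated word `x̄ = w̄_m z̄_m w̄_{m−1} z̄_{m−1} ⋯ w̄_1 z̄_1`. -/
def xbar (n m : ℕ) (cs as : ℕ → ℕ) : List ℕ :=
  ((List.range m).map fun t => wbar n cs (m - 1 - t) ++ zbar n as (m - 1 - t)).flatten

lemma invLen_one_s11 (N : ℕ) : invLen (1 : Equiv.Perm (Fin N)) = 0 :=
  Finset.card_eq_zero.2 (Finset.filter_eq_empty_iff.2 fun _ _ h => lt_asymm h.1 h.2)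

lemma swap_lt_swap_iff {N : ℕ} {a b : Fin N} (hab : (b : ℕ) = a + 1) (x y : Fin N) :
    Equiv.swap a b x < Equiv.swap a b y ↔ (x < y ∧ ¬(x = a ∧ y = b)) ∨ (x = b ∧ y = a) := by
  simp only [Equiv.swap_apply_def, Fin.lt_def, Fin.ext_iff]
  split_ifs <;> omega

lemma invLen_mul_swap {N : ℕ} {a b : Fin N} (hab : (b : ℕ) = a + 1) (u : Equiv.Perm (Fin N))
    (h : u a < u b) : invLen (u * Equiv.swap a b) = invLen u + 1 := by
  have hab' : a < b := by simp [Fin.lt_def, hab]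
  have hba : (b, a) ∉ Finset.univ.filter fun p : Fin N × Fin N => p.1 < p.2 ∧ u p.2 < u p.1 := by
    simp [hab'.not_gt]
  -- Swapping both coordinates maps the inversions of `u * swap a b` onto those of `u` and `(b, a)`.
  rw [invLen, invLen, ← Finset.card_insert_of_notMem hba]
  refine Finset.card_equiv (Equiv.prodCongr (Equiv.swap a b) (Equiv.swap a b)) fun p => ?_
  obtain ⟨x, y⟩ := p
  simp only [Finset.mem_filter, Finset.mem_univ, true_and, Finset.mem_insert]
  simp only [Prod.mk.injEq, Equiv.prodCongr_apply, Prod.map, Equiv.Perm.mul_apply,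
    swap_lt_swap_iff hab, Equiv.swap_apply_eq_iff, Equiv.swap_apply_left, Equiv.swap_apply_right]
  by_cases hxy : x = a ∧ y = b
  · obtain ⟨rfl, rfl⟩ := hxy
    simp [hab', h]
  by_cases hyx : x = b ∧ y = a
  · obtain ⟨rfl, rfl⟩ := hyx
    simp [hab'.not_gt, hab'.ne', h.le]
  simp [hxy, hyx]

lemma sT_eq_swap {N j : ℕ} (h : j + 1 < N) :
    sT N j = Equiv.swap ⟨j, Nat.lt_of_succ_lt h⟩ ⟨j + 1, h⟩ := dif_pos h

lemma wordProd_append (N : ℕ) (l₁ l₂ : List ℕ) :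
    wordProd N (l₁ ++ l₂) = wordProd N l₁ * wordProd N l₂ := by
  simp [wordProd]

lemma wordProd_range'_succ (N j k : ℕ) :
    wordProd N (List.range' j (k + 1)) = wordProd N (List.range' j k) * sT N (j + k) := by
  rw [List.range'_concat, wordProd_append]
  simp [wordProd]

lemma wordProd_range'_apply {N j k : ℕ} (hk : j + k < N) (t : Fin N) :
    (wordProd N (List.range' j k) t : ℕ) =
      if j ≤ t ∧ (t : ℕ) < j + k then (t : ℕ) + 1 else if (t : ℕ) = j + k then j else (t : ℕ) := by
  induction k generalizing t with
  | zero => simp only [wordProd]; split_ifs <;> simp <;> omega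
  | succ k ih =>
    rw [wordProd_range'_succ, Equiv.Perm.mul_apply, ih (by omega), sT_eq_swap (by omega),
      Equiv.swap_apply_def]
    split_ifs <;> simp_all [Fin.ext_iff] <;> omega

lemma strictMonoOn_wordProd_range' {N j k : ℕ} (hk : j + k < N) :
    StrictMonoOn (wordProd N (List.range' j k)) {t | (t : ℕ) < j + k} := by
  intro p hp q hq hpq
  simp only [Set.mem_ofPred_eq, Fin.lt_def] at hp hq hpq ⊢
  rw [wordProd_range'_apply hk, wordProd_range'_apply hk]
  split_ifs <;> omega

lemma mapsTo_wordProd_range' {N j k : ℕ} (hk : j + k < N) :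
    Set.MapsTo (wordProd N (List.range' j k)) {t | (t : ℕ) < j + k} {t | (t : ℕ) < j + k + 1} := by
  intro t ht
  simp only [Set.mem_ofPred_eq] at ht ⊢
  rw [wordProd_range'_apply hk]
  split_ifs <;> omega

lemma invLen_mul_wordProd_range' {N j k : ℕ} (hk : j + k < N) (u : Equiv.Perm (Fin N))
    (hu : StrictMonoOn u {t | (t : ℕ) < j + k + 1}) :
    invLen (u * wordProd N (List.range' j k)) = invLen u + k := by
  induction k with
  | zero => simp [wordProd]
  | succ k ih =>
    have hlt : (u * wordProd N (List.range' j k)) ⟨j + k, by omega⟩ <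
        (u * wordProd N (List.range' j k)) ⟨j + k + 1, hk⟩ := by
      have hj : wordProd N (List.range' j k) ⟨j + k, by omega⟩ = ⟨j, by omega⟩ :=
        Fin.ext (by rw [wordProd_range'_apply (by omega)]; simp)
      have hjk : wordProd N (List.range' j k) ⟨j + k + 1, hk⟩ = ⟨j + k + 1, hk⟩ :=
        Fin.ext (by rw [wordProd_range'_apply (by omega)]; simp)
      rw [Equiv.Perm.mul_apply, Equiv.Perm.mul_apply, hj, hjk]
      exact hu (by simp) (by simp) (by simp [Fin.lt_def])
    rw [wordProd_range'_succ, ← mul_assoc, sT_eq_swap (j := j + k) hk, invLen_mul_swap rfl _ hlt,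
      ih (by omega) (hu.mono fun t ht => by simp only [Set.mem_ofPred_eq] at ht ⊢; omega)]
    rfl

def ReducedExtension (N r r' : ℕ) (l : List ℕ) : Prop :=
  ∀ u : Equiv.Perm (Fin N), StrictMonoOn u {t | (t : ℕ) < r} →
    invLen (u * wordProd N l) = invLen u + l.length ∧
      StrictMonoOn (u * wordProd N l) {t | (t : ℕ) < r'}

namespace ReducedExtension

variable {N r r' : ℕ}

lemma mono {s s' : ℕ} {l : List ℕ} (h : ReducedExtension N r r' l) (hs : r ≤ s) (hs' : s' ≤ r') :
    ReducedExtension N s s' l := fun u hu =>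
  have ⟨hlen, hmono⟩ := h u (hu.mono fun _ ht => ht.trans_le hs)
  ⟨hlen, hmono.mono fun _ ht => ht.trans_le hs'⟩

lemma append {r'' : ℕ} {l₁ l₂ : List ℕ} (h₁ : ReducedExtension N r r' l₁)
    (h₂ : ReducedExtension N r' r'' l₂) : ReducedExtension N r r'' (l₁ ++ l₂) := fun u hu => by
  obtain ⟨hlen₁, hmono₁⟩ := h₁ u hu
  obtain ⟨hlen₂, hmono₂⟩ := h₂ _ hmono₁
  rw [wordProd_append, ← mul_assoc, hlen₂, hlen₁, List.length_append, add_assoc]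
  exact ⟨rfl, hmono₂⟩

lemma flatten_range {d : ℕ} (rs : ℕ → ℕ) (f : ℕ → List ℕ)
    (h : ∀ t < d, ReducedExtension N (rs t) (rs (t + 1)) (f t)) :
    ReducedExtension N (rs 0) (rs d) ((List.range d).map f).flatten := by
  induction d with
  | zero => intro u hu; simpa [wordProd] using hu
  | succ d ih =>
    rw [List.range_succ, List.map_append, List.flatten_append]
    simpa using (ih fun t ht => h t (by omega)).append (h d (by omega))

lemma range' {j k : ℕ} (hk : j + k < N) :
    ReducedExtension N (j + k + 1) (j + k) (List.range' j k) :=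
  fun u hu => ⟨by rw [invLen_mul_wordProd_range' hk u hu, List.length_range'],
    hu.comp (strictMonoOn_wordProd_range' hk) (mapsTo_wordProd_range' hk)⟩

lemma flatten_range_range' {j B A : ℕ} (hB : j + B < N) (hAB : A ≤ B) :
    ReducedExtension N (j + B + 1) (j + B + 1 - A)
      ((List.range A).map fun t => List.range' j (B - t)).flatten := by
  simpa using flatten_range (N := N) (fun t => j + B + 1 - t) (fun t => List.range' j (B - t))
    fun t ht => (range' (by omega)).mono (by omega) (by omega)

end ReducedExtension

lemma reducedExtension_wbar_append_zbar {n N : ℕ} {as cs : ℕ → ℕ} {i : ℕ} (hc : cs i + 2 ≤ n)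
    (ha : 0 < as i) (hN : n + bsum as (i + 1) ≤ N) :
    ReducedExtension N (n + bsum as (i + 1)) (n + bsum as i) (wbar n cs i ++ zbar n as i) := by
  obtain ⟨A, hA⟩ : ∃ A, as i = A + 1 := Nat.exists_eq_add_one.mpr ha
  have hB : bsum as (i + 1) = bsum as i + (A + 1) := by rw [← hA]; exact Finset.sum_range_succ as i
  have hword : wbar n cs i ++ zbar n as i =
      List.range' (cs i) (n - 1 - cs i + bsum as (i + 1)) ++
        ((List.range A).map fun t => List.range' (n - 1) (bsum as (i + 1) - 1 - t)).flatten := by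
    rw [wbar, zbar, hA, List.range_succ_eq_map, List.map_cons, List.flatten_cons,
      ← List.append_assoc, ← List.range'_append_1, List.map_map,
      show cs i + (n - 1 - cs i) = n - 1 by omega]
    congr 3
    funext t
    rw [Function.comp_apply, Nat.sub_sub, Nat.add_comm 1 t]
  rw [hword]
  have h₁ : ReducedExtension N (n + bsum as (i + 1)) (n - 1 + bsum as (i + 1))
      (List.range' (cs i) (n - 1 - cs i + bsum as (i + 1))) :=
    (ReducedExtension.range' (by omega)).mono (by omega) (by omega)
  have h₂ : ReducedExtension N (n - 1 + bsum as (i + 1)) (n + bsum as i)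
      ((List.range A).map fun t => List.range' (n - 1) (bsum as (i + 1) - 1 - t)).flatten :=
    (ReducedExtension.flatten_range_range' (by omega) (by omega)).mono (by omega) (by omega)
  exact h₁.append h₂

theorem stmt11_general (n m : ℕ) (as cs : ℕ → ℕ)
    (hpos : ∀ i < m, 0 < as i) (hcs : ∀ i < m, cs i + 2 ≤ n)
    (N : ℕ) (hN : N = n + bsum as m) :
    invLen (wordProd N (xbar n m cs as)) = (xbar n m cs as).length := by
  have hphase : ∀ t < m, ReducedExtension N (n + bsum as (m - t)) (n + bsum as (m - (t + 1)))
      (wbar n cs (m - 1 - t) ++ zbar n as (m - 1 - t)) := fun t ht => by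
    have hle : bsum as (m - t) ≤ bsum as m :=
      Finset.sum_le_sum_of_subset (Finset.range_subset_range.2 (Nat.sub_le m t))
    rw [show m - t = m - 1 - t + 1 by omega, show m - (t + 1) = m - 1 - t by omega] at *
    exact reducedExtension_wbar_append_zbar (hcs _ (by omega)) (hpos _ (by omega)) (by omega)
  have hx := ReducedExtension.flatten_range _ _ hphase
  simp only [Nat.sub_zero, Nat.sub_self] at hx
  have hlen := (hx 1 (strictMono_id.strictMonoOn _)).1
  rw [one_mul, invLen_one_s11, zero_add] at hlen
  exact hlen

/-- the word `x̄ = w̄_m z̄_m ⋯ w̄_1 z̄_1` is a reduced expression: the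
Coxeter length (number of inversions) of its product `x ∈ S_N` equals its number of
letters. -/
theorem stmt11 (n m : ℕ) (hn : 2 ≤ n) (hm : 1 ≤ m) (as cs : ℕ → ℕ)
    (hpos : ∀ i < m, 0 < as i) (hcs : ∀ i < m, cs i + 2 ≤ n)
    (N : ℕ) (hN : N = n + bsum as m)
    (hsum : ∑ i ∈ Finset.range m, invLen (wordProd N (wbar n cs i)) = bsum as m) :
    invLen (wordProd N (xbar n m cs as)) = (xbar n m cs as).length :=
  stmt11_general n m as cs hpos hcs N hN
end

section
/- The concatenated word z̄_m z̄_{m−1} ⋯ z̄_1 is a reduced expression for the longest element of the subgroup of S_N generated by {s_n, s_{n+1}, …, s_{n+a−1}}. Similarly, the concatenated word z̄'_m z̄'_{m−1} ⋯ z̄'_1 is a reduced expression for the longest element w_A of the subgroup W_A of S_N generated by A = {s_{n+1},…,s_{n+a−1}}. -/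
/-!
In 0-indexed letters, `z̄_m ⋯ z̄_1` is the staircase word
`(c, …, c+k−1)(c, …, c+k−2) ⋯ (c)` with `c = n − 1`, `k = a`, and deleting the letter `c`
from a staircase leaves the staircase for `c + 1`, `k − 1`. A staircase multiplies out to the
reversal of the interval `[c, c + k]`, which inverts every pair in the interval; there are as
many such pairs as letters in the word, so the word is reduced. Every element of the subgroup
generated by `s_c, …, s_{c+k−1}` fixes all points outside the interval and so can invert only
pairs inside it, hence the reversal is the longest element.
-/

def staircase (c k : ℕ) : List ℕ :=
  ((List.range k).map fun t => List.range' c (k - t)).flatten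

def intervalPairs (N c k : ℕ) : Finset (Fin N × Fin N) :=
  Finset.univ.filter fun p => c ≤ (p.1 : ℕ) ∧ p.1 < p.2 ∧ (p.2 : ℕ) ≤ c + k

lemma wordProd_singleton (N i : ℕ) : wordProd N [i] = sT N i := by
  simp [wordProd]

lemma sT_val_apply {N i : ℕ} (h : i + 1 < N) (x : Fin N) :
    (sT N i x : ℕ) = if (x : ℕ) = i then i + 1 else if (x : ℕ) = i + 1 then i else x := by
  rw [sT, dif_pos h, Equiv.swap_apply_def]
  split_ifs <;> simp_all [Fin.ext_iff]

lemma wordProd_range'_val_apply {N c j : ℕ} (h : c + j < N) (x : Fin N) :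
    (wordProd N (List.range' c j) x : ℕ) =
      if c ≤ (x : ℕ) ∧ (x : ℕ) < c + j then (x : ℕ) + 1 else if (x : ℕ) = c + j then c else x := by
  induction j generalizing x with
  | zero => simp [wordProd]; split_ifs <;> omega
  | succ j ih =>
    rw [List.range'_concat, one_mul, wordProd_append, wordProd_singleton, Equiv.Perm.mul_apply,
      ih (by omega), sT_val_apply (by omega)]
    split_ifs <;> omega

lemma staircase_succ (c k : ℕ) :
    staircase c (k + 1) = List.range' c (k + 1) ++ staircase c k := by
  simp only [staircase, List.range_succ_eq_map, List.map_cons, List.flatten_cons, List.map_map]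
  congr 2
  exact List.map_congr_left fun t _ => by simp

lemma staircase_add (c k d : ℕ) :
    staircase c (k + d) =
      ((List.range d).map fun t => List.range' c (k + d - t)).flatten ++ staircase c k := by
  rw [staircase, add_comm k d, List.range_add, List.map_append, List.flatten_append,
    List.map_map, staircase]
  congr 2
  exact List.map_congr_left fun t _ => by simp only [Function.comp_apply]; congr 1; omega

lemma length_staircase (c k : ℕ) : (staircase c k).length = ∑ j ∈ Finset.range (k + 1), j := by
  induction k with
  | zero => simp [staircase]
  | succ k ih => rw [staircase_succ, List.length_append, ih, Finset.sum_range_succ _ (k + 1),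
      List.length_range', add_comm]

lemma wordProd_staircase_val_apply {N c k : ℕ} (h : c + k < N) (x : Fin N) :
    (wordProd N (staircase c k) x : ℕ) =
      if c ≤ (x : ℕ) ∧ (x : ℕ) ≤ c + k then c + k + c - x else x := by
  induction k generalizing x with
  | zero => simp [staircase, wordProd]; omega
  | succ k ih =>
    rw [staircase_succ, wordProd_append, Equiv.Perm.mul_apply,
      wordProd_range'_val_apply h, ih (by omega)]
    split_ifs <;> omega

lemma card_intervalPairs {N c k : ℕ} (h : c + k < N) :
    (intervalPairs N c k).card = ∑ j ∈ Finset.range (k + 1), j := by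
  have hsigma : (intervalPairs N c k).card =
      ((Finset.range (k + 1)).sigma fun j => Finset.range j).card := by
    refine Finset.card_bij (fun p _ => ⟨(p.2 : ℕ) - c, (p.1 : ℕ) - c⟩) ?_ ?_ ?_
    · intro p hp
      simp only [intervalPairs, Finset.mem_filter, Finset.mem_univ, true_and, Fin.lt_def] at hp
      simp only [Finset.mem_sigma, Finset.mem_range]
      omega
    · intro p hp q hq hpq
      simp only [intervalPairs, Finset.mem_filter, Finset.mem_univ, true_and, Fin.lt_def] at hp hq
      simp only [Sigma.mk.injEq, heq_eq_eq] at hpq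
      ext <;> omega
    · rintro ⟨j, i⟩ hji
      simp only [Finset.mem_sigma, Finset.mem_range] at hji
      refine ⟨(⟨c + i, by omega⟩, ⟨c + j, by omega⟩), ?_, by simp⟩
      simp only [intervalPairs, Finset.mem_filter, Finset.mem_univ, true_and, Fin.lt_def]
      omega
  simp [hsigma]

lemma invLen_wordProd_staircase {N c k : ℕ} (h : c + k < N) :
    invLen (wordProd N (staircase c k)) = (intervalPairs N c k).card := by
  rw [invLen, intervalPairs]
  congr 1
  refine Finset.filter_congr fun p _ => ?_
  have h₁ := wordProd_staircase_val_apply h p.1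
  have h₂ := wordProd_staircase_val_apply h p.2
  simp only [Fin.lt_def]
  split_ifs at h₁ h₂ <;> omega

lemma closure_sT_le_fixingSubgroup (N c k : ℕ) :
    Subgroup.closure (sT N '' Set.Ico c (c + k)) ≤
      fixingSubgroup (Equiv.Perm (Fin N)) {x : Fin N | (x : ℕ) < c ∨ c + k < x} := by
  rw [Subgroup.closure_le]
  rintro _ ⟨i, ⟨hci, hik⟩, rfl⟩
  refine (mem_fixingSubgroup_iff _).mpr fun x (hx : (x : ℕ) < c ∨ c + k < x) => ?_
  rw [Equiv.Perm.smul_def, sT]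
  split_ifs
  · exact Equiv.swap_apply_of_ne_of_ne (Fin.ne_of_val_ne (show (x : ℕ) ≠ i by omega))
      (Fin.ne_of_val_ne (show (x : ℕ) ≠ i + 1 by omega))
  · rfl

lemma invLen_le_card_intervalPairs {N c k : ℕ} {u : Equiv.Perm (Fin N)}
    (hu : ∀ x : Fin N, (x : ℕ) < c ∨ c + k < x → u x = x) :
    invLen u ≤ (intervalPairs N c k).card := by
  have hval : ∀ x : Fin N, (x : ℕ) < c ∨ c + k < x → (u x : ℕ) = x :=
    fun x hx => congrArg Fin.val (hu x hx)
  have hmaps : ∀ x : Fin N, c ≤ (x : ℕ) ∧ (x : ℕ) ≤ c + k →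
      c ≤ (u x : ℕ) ∧ (u x : ℕ) ≤ c + k := by
    intro x hx
    by_contra hux
    have := u.injective (hu (u x) (by omega))
    omega
  refine Finset.card_le_card fun p hp => ?_
  simp only [intervalPairs, Finset.mem_filter, Finset.mem_univ, true_and, Fin.lt_def] at hp ⊢
  have h₁ := hval p.1
  have h₂ := hval p.2
  have h₃ := hmaps p.1
  have h₄ := hmaps p.2
  omega

lemma wordProd_staircase_mem_closure (N c k : ℕ) :
    wordProd N (staircase c k) ∈ Subgroup.closure (sT N '' Set.Ico c (c + k)) := by
  refine list_prod_mem fun g hg => Subgroup.subset_closure ?_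
  simp only [staircase, List.mem_map, List.mem_flatten, List.mem_range] at hg
  obtain ⟨i, ⟨_, ⟨t, ht, rfl⟩, hi⟩, rfl⟩ := hg
  rw [List.mem_range'_1] at hi
  exact ⟨i, ⟨hi.1, by omega⟩, rfl⟩

theorem staircase_reduced_longest {N c k : ℕ} (h : c + k < N) :
    invLen (wordProd N (staircase c k)) = (staircase c k).length ∧
      wordProd N (staircase c k) ∈ Subgroup.closure (sT N '' Set.Ico c (c + k)) ∧
      ∀ u ∈ Subgroup.closure (sT N '' Set.Ico c (c + k)),
        invLen u ≤ invLen (wordProd N (staircase c k)) := by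
  refine ⟨by rw [invLen_wordProd_staircase h, card_intervalPairs h, length_staircase],
    wordProd_staircase_mem_closure N c k, fun u hu => ?_⟩
  rw [invLen_wordProd_staircase h]
  exact invLen_le_card_intervalPairs fun x hx =>
    (mem_fixingSubgroup_iff _).mp (closure_sT_le_fixingSubgroup N c k hu) x hx

lemma flatten_zbar_eq_staircase (n : ℕ) (as : ℕ → ℕ) (m : ℕ) :
    ((List.range m).map fun t => zbar n as (m - 1 - t)).flatten =
      staircase (n - 1) (bsum as m) := by
  induction m with
  | zero => simp [staircase, bsum]
  | succ m ih =>
    have hsucc : bsum as (m + 1) = bsum as m + as m := Finset.sum_range_succ as m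
    rw [List.range_succ_eq_map, List.map_cons, List.flatten_cons, List.map_map, hsucc,
      staircase_add, ← ih, zbar, Nat.add_sub_cancel, Nat.sub_zero, hsucc]
    congr 2
    exact List.map_congr_left fun t _ => by simp only [Function.comp_apply]; congr 1; omega

lemma filter_range'_ne_self (c j : ℕ) :
    (List.range' c (j + 1)).filter (· ≠ c) = List.range' (c + 1) j := by
  rw [List.range'_succ, List.filter_cons_of_neg (by simp), List.filter_eq_self]
  intro x hx
  rw [List.mem_range'_1] at hx
  simp only [ne_eq, decide_eq_true_eq]
  omega

lemma filter_staircase_ne_self (c k : ℕ) :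
    (staircase c k).filter (· ≠ c) = staircase (c + 1) (k - 1) := by
  induction k with
  | zero => simp [staircase]
  | succ k ih =>
    rw [staircase_succ, List.filter_append, filter_range'_ne_self, ih]
    cases k with
    | zero => simp [staircase]
    | succ k => rw [Nat.add_sub_cancel, Nat.add_sub_cancel, ← staircase_succ]

/-- `z̄_m z̄_{m−1} ⋯ z̄_1` is a reduced expression for the longest element
of the subgroup of `S_N` generated by `{s_n,…,s_{n+a−1}}` (0-indexed letters `t` with
`n − 1 ≤ t` and `t + 2 ≤ n + a`), and the word `z̄'_m ⋯ z̄'_1` obtained by deleting all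
occurrences of `s_n` (letter `n − 1`) is a reduced expression for the longest element
`w_A` of `W_A`, the subgroup generated by `A = {s_{n+1},…,s_{n+a−1}}`. -/
theorem stmt14 (n m : ℕ) (hn : 2 ≤ n) (hm : 1 ≤ m) (as : ℕ → ℕ)
    (hpos : ∀ i < m, 0 < as i) (N : ℕ) (hN : N = n + bsum as m) :
    (invLen (wordProd N (((List.range m).map fun t => zbar n as (m - 1 - t)).flatten)) =
        (((List.range m).map fun t => zbar n as (m - 1 - t)).flatten).length ∧
      wordProd N (((List.range m).map fun t => zbar n as (m - 1 - t)).flatten) ∈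
        Subgroup.closure
          ((fun i => sT N i) '' {i : ℕ | n - 1 ≤ i ∧ i + 2 ≤ n + bsum as m}) ∧
      ∀ u ∈ Subgroup.closure
          ((fun i => sT N i) '' {i : ℕ | n - 1 ≤ i ∧ i + 2 ≤ n + bsum as m}),
        invLen u ≤
          invLen (wordProd N (((List.range m).map fun t => zbar n as (m - 1 - t)).flatten)))
    ∧
    (invLen (wordProd N
          (((List.range m).map fun t =>
            (zbar n as (m - 1 - t)).filter fun x => x ≠ n - 1).flatten)) =
        ((((List.range m).map fun t =>
            (zbar n as (m - 1 - t)).filter fun x => x ≠ n - 1).flatten)).length ∧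
      wordProd N (((List.range m).map fun t =>
            (zbar n as (m - 1 - t)).filter fun x => x ≠ n - 1).flatten) ∈
        Subgroup.closure
          ((fun i => sT N i) '' {i : ℕ | n ≤ i ∧ i + 2 ≤ n + bsum as m}) ∧
      ∀ u ∈ Subgroup.closure
          ((fun i => sT N i) '' {i : ℕ | n ≤ i ∧ i + 2 ≤ n + bsum as m}),
        invLen u ≤ invLen (wordProd N (((List.range m).map fun t =>
            (zbar n as (m - 1 - t)).filter fun x => x ≠ n - 1).flatten))) := by
  subst hN
  have ha : 0 < bsum as m :=
    Finset.sum_pos (fun i hi => hpos i (Finset.mem_range.mp hi)) ⟨0, Finset.mem_range.mpr hm⟩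
  have hfilter : ((List.range m).map fun t =>
      (zbar n as (m - 1 - t)).filter fun x => x ≠ n - 1).flatten = staircase n (bsum as m - 1) :=
    calc _ = (((List.range m).map fun t => zbar n as (m - 1 - t)).flatten).filter (· ≠ n - 1) := by
          rw [List.filter_flatten, List.map_map]; rfl
      _ = staircase n (bsum as m - 1) := by
          rw [flatten_zbar_eq_staircase, filter_staircase_ne_self, Nat.sub_add_cancel (by omega)]
  have hgens : {i : ℕ | n - 1 ≤ i ∧ i + 2 ≤ n + bsum as m} =
      Set.Ico (n - 1) (n - 1 + bsum as m) := by
    ext i; simp only [Set.mem_ofPred_eq, Set.mem_Ico]; omega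
  have hgens' : {i : ℕ | n ≤ i ∧ i + 2 ≤ n + bsum as m} = Set.Ico n (n + (bsum as m - 1)) := by
    ext i; simp only [Set.mem_ofPred_eq, Set.mem_Ico]; omega
  rw [flatten_zbar_eq_staircase, hfilter, hgens, hgens']
  exact ⟨staircase_reduced_longest (by omega), staircase_reduced_longest (by omega)⟩
end
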